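/- For every i and every pair of consecutive entries p, q of the i-th Stern-Brocot half-sequence SB i, the mediant is already in lowest terms: gcd(num(p) + num(q), den(p) + den(q)) = 1. Consequently the rational (num(p)+num(q))/(den(p)+den(q)) has numerator num(p)+num(q) and denominator den(p)+den(q). -/

import Mathlib

/-- The mediant of two rationals `p` and `q`: `(num p + num q) / (den p + den q)`. -/
def mediant (p q : ℚ) : ℚ := ((p.num + q.num : ℤ) : ℚ) / ((p.den + q.den : ℕ) : ℚ)

/-- Insert between every pair of consecutive entries of a list their mediant. -/
def insertMediants : List ℚ → List ℚ
  | [] => []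
  | [p] => [p]
  | p :: q :: rest => p :: mediant p q :: insertMediants (q :: rest)

/-- The Stern-Brocot half-sequences: `SB 0 = [0/1, 1/1]`, and each successive
sequence is obtained by inserting mediants between consecutive entries. -/
def SB : ℕ → List ℚ
  | 0 => [0, 1]
  | i + 1 => insertMediants (SB i)

/-- Consecutive entries `a/b, c/d` of every `SB i` satisfy `b c - a d = 1`. This forces the
mediant to be reduced, via the Bézout relation `c (b + d) - d (a + c) = 1`, and it is inherited
by both pairs the mediant creates. -/
def FareyNeighbors (p q : ℚ) : Prop := q.num * p.den - p.num * q.den = 1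

namespace FareyNeighbors

variable {p q : ℚ}

theorem isCoprime_num_add_den_add (h : FareyNeighbors p q) :
    IsCoprime (p.num + q.num) ((p.den : ℤ) + q.den) :=
  ⟨-(q.den : ℤ), q.num, by rw [FareyNeighbors] at h; linear_combination h⟩

theorem gcd_num_add_den_add (h : FareyNeighbors p q) :
    Int.gcd (p.num + q.num) ((p.den : ℤ) + q.den) = 1 :=
  Int.isCoprime_iff_gcd_eq_one.mp h.isCoprime_num_add_den_add

theorem mediant_num (h : FareyNeighbors p q) : (mediant p q).num = p.num + q.num := by
  have hpos : (0 : ℤ) < ((p.den + q.den : ℕ) : ℤ) := by positivity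
  rw [mediant, ← Int.cast_natCast, Rat.num_div_eq_of_coprime hpos]
  simpa [Int.gcd] using h.gcd_num_add_den_add

theorem mediant_den (h : FareyNeighbors p q) : (mediant p q).den = p.den + q.den := by
  have hpos : (0 : ℤ) < ((p.den + q.den : ℕ) : ℤ) := by positivity
  have := Rat.den_div_eq_of_coprime hpos (by simpa [Int.gcd] using h.gcd_num_add_den_add)
  rw [mediant, ← Int.cast_natCast]
  omega

theorem left_mediant (h : FareyNeighbors p q) : FareyNeighbors p (mediant p q) := by
  rw [FareyNeighbors, h.mediant_num, h.mediant_den]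
  rw [FareyNeighbors] at h
  push_cast
  linear_combination h

theorem mediant_right (h : FareyNeighbors p q) : FareyNeighbors (mediant p q) q := by
  rw [FareyNeighbors, h.mediant_num, h.mediant_den]
  rw [FareyNeighbors] at h
  push_cast
  linear_combination h

end FareyNeighbors

theorem exists_insertMediants_cons (q : ℚ) (l : List ℚ) :
    ∃ s, insertMediants (q :: l) = q :: s := by
  cases l <;> exact ⟨_, rfl⟩

theorem isChain_insertMediants {R : ℚ → ℚ → Prop}
    (hR : ∀ p q, R p q → R p (mediant p q) ∧ R (mediant p q) q) :
    ∀ l : List ℚ, l.IsChain R → (insertMediants l).IsChain R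
  | [], _ | [_], _ => by simp [insertMediants]
  | p :: q :: rest, h => by
    obtain ⟨hpq, hrest⟩ := List.isChain_cons_cons.mp h
    obtain ⟨s, hs⟩ := exists_insertMediants_cons q rest
    have ih := isChain_insertMediants hR (q :: rest) hrest
    rw [hs] at ih
    rw [insertMediants, hs, List.isChain_cons_cons, List.isChain_cons_cons]
    exact ⟨(hR p q hpq).1, (hR p q hpq).2, ih⟩

theorem isChain_fareyNeighbors_SB (i : ℕ) : (SB i).IsChain FareyNeighbors := by
  induction i with
  | zero => simp [SB, FareyNeighbors]
  | succ i ih =>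
    exact isChain_insertMediants (fun _ _ h => ⟨h.left_mediant, h.mediant_right⟩) _ ih

/-- For every pair of consecutive entries `p, q` of the `i`-th Stern-Brocot half-sequence,
the mediant is already in lowest terms: `gcd (num p + num q) (den p + den q) = 1`;
consequently the mediant rational has numerator `num p + num q` and denominator
`den p + den q`. -/
theorem sternBrocot_mediant_reduced (i j : ℕ) (hj : j + 1 < (SB i).length) :
    Int.gcd ((SB i)[j].num + (SB i)[j + 1].num)
        (((SB i)[j].den : ℤ) + ((SB i)[j + 1].den : ℤ)) = 1 ∧
    (mediant (SB i)[j] (SB i)[j + 1]).num = (SB i)[j].num + (SB i)[j + 1].num ∧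
    (mediant (SB i)[j] (SB i)[j + 1]).den = (SB i)[j].den + (SB i)[j + 1].den := by
  have h : FareyNeighbors (SB i)[j] (SB i)[j + 1] :=
    List.isChain_iff_getElem.mp (isChain_fareyNeighbors_SB i) j hj
  exact ⟨h.gcd_num_add_den_add, h.mediant_num, h.mediant_den⟩
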